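/- arXiv:math/0510229 — 7 statements merged into one kernel-verified Lean document; each statement's English description precedes it below -/
import Mathlib

section
/- Let Y be a nonempty set, D a countably complete filter on Y, and f : Y → Ord. For every ordinal α ≤ rk_D(f) there exists g : Y → Ord with g(y) ≤ f(y) for all y ∈ Y and rk_D(g) = α; moreover, if α < rk_D(f) then g can additionally be chosen with g <_D f. -/
/-!
Since `D` is countably complete, a `<_D`-descending sequence would be pointwise descending at
some common `y`, so `<_D` is well-founded. The rank `rk_D g` only depends on the `D`-germ of `g`.
Induct on `f`: if `α < rk_D f`, some `g <_D f` has `α ≤ rk_D g`, and induction yields `h ≤ g`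
of rank `α`; then `min h f ≤ f` agrees with `h` on `{g < f} ∈ D`, so it has rank `α` and lies
`<_D`-below `f`.
-/

/-- `f <_D g` iff `{y | f y < g y} ∈ D`. -/
def ltD {Y : Type} (D : Filter Y) (f g : Y → Ordinal) : Prop :=
  {y | f y < g y} ∈ D

/-- The rank `rk_D f` of `f : Y → Ord` with respect to the (well-founded, for countably
complete `D`) relation `<_D`. -/
noncomputable def rkD {Y : Type} (D : Filter Y) (f : Y → Ordinal) : Ordinal.{1} :=
  haveI := Classical.dec
  if h : Acc (ltD D) f then h.rank else 0

namespace IsWellFounded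

variable {α : Type*} {r : α → α → Prop} [IsWellFounded α r] {a b : α}

theorem rank_le_rank_of_forall_rel (h : ∀ c, r c a → r c b) : rank r a ≤ rank r b := by
  rw [rank_eq r a]
  exact Ordinal.iSup_le fun c => Order.succ_le_of_lt (rank_lt_of_rel (h c.1 c.2))

theorem exists_rel_le_rank_of_lt_rank {o : Ordinal} (h : o < rank r a) :
    ∃ b, r b a ∧ o ≤ rank r b := by
  rw [rank_eq, Ordinal.lt_iSup_iff] at h
  obtain ⟨⟨b, hba⟩, hb⟩ := h
  exact ⟨b, hba, Order.lt_succ_iff.1 hb⟩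

end IsWellFounded

open IsWellFounded

section ltD

variable {Y : Type} (D : Filter Y)

theorem isWellFounded_ltD [CountableInterFilter D] [D.NeBot] :
    IsWellFounded (Y → Ordinal) (ltD D) := by
  refine ⟨wellFounded_iff_isEmpty_descending_chain.2 ⟨fun ⟨u, hu⟩ => ?_⟩⟩
  obtain ⟨y, hy⟩ := Filter.nonempty_of_mem (countable_iInter_mem.2 hu)
  obtain ⟨n, hn⟩ := WellFounded.not_rel_apply_succ (r := (· < ·)) fun n => u n y
  exact hn (Set.mem_iInter.1 hy n)

variable {D}

theorem rkD_eq_rank [IsWellFounded (Y → Ordinal) (ltD D)] (f : Y → Ordinal) :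
    rkD D f = rank (ltD D) f := by
  rw [rkD, dif_pos (IsWellFounded.apply _ f)]
  rfl

theorem ltD_congr_right {c g g' : Y → Ordinal} (hg : g =ᶠ[D] g') (hc : ltD D c g) :
    ltD D c g' := by
  filter_upwards [hc, hg] with y hy hy' using hy.trans_eq hy'

theorem rank_ltD_congr [IsWellFounded (Y → Ordinal) (ltD D)] {g g' : Y → Ordinal}
    (hg : g =ᶠ[D] g') : rank (ltD D) g = rank (ltD D) g' :=
  (rank_le_rank_of_forall_rel fun _ => ltD_congr_right hg).antisymm
    (rank_le_rank_of_forall_rel fun _ => ltD_congr_right hg.symm)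

theorem min_eventuallyEq_of_le_of_ltD {f g h : Y → Ordinal} (hle : ∀ y, h y ≤ g y)
    (hgf : ltD D g f) : (fun y => min (h y) (f y)) =ᶠ[D] h := by
  filter_upwards [hgf] with y hy using min_eq_left ((hle y).trans hy.le)

theorem ltD_min_of_le_of_ltD {f g h : Y → Ordinal} (hle : ∀ y, h y ≤ g y)
    (hgf : ltD D g f) : ltD D (fun y => min (h y) (f y)) f := by
  filter_upwards [hgf] with y hy using min_lt_iff.2 (Or.inl ((hle y).trans_lt hy))

theorem exists_le_rank_eq [IsWellFounded (Y → Ordinal) (ltD D)] (f : Y → Ordinal)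
    {α : Ordinal} (hα : α ≤ rank (ltD D) f) :
    ∃ g : Y → Ordinal, (∀ y, g y ≤ f y) ∧ rank (ltD D) g = α ∧
      (α < rank (ltD D) f → ltD D g f) := by
  induction f using IsWellFounded.induction (ltD D) with
  | _ f IH =>
  rcases hα.eq_or_lt with rfl | hlt
  · exact ⟨f, fun _ => le_rfl, rfl, fun h => absurd h (lt_irrefl _)⟩
  obtain ⟨g, hgf, hαg⟩ := exists_rel_le_rank_of_lt_rank hlt
  obtain ⟨h, hhg, rfl, -⟩ := IH g hgf hαg
  exact ⟨fun y => min (h y) (f y), fun _ => min_le_right _ _,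
    rank_ltD_congr (min_eventuallyEq_of_le_of_ltD hhg hgf),
    fun _ => ltD_min_of_le_of_ltD hhg hgf⟩

end ltD

theorem stmt1_general {Y : Type} (D : Filter Y)
    (hcc : CountableInterFilter D) (hne : D.NeBot)
    (f : Y → Ordinal) (α : Ordinal.{1}) (hα : α ≤ rkD D f) :
    ∃ g : Y → Ordinal, (∀ y, g y ≤ f y) ∧ rkD D g = α ∧
      (α < rkD D f → ltD D g f) := by
  have := isWellFounded_ltD D
  rw [rkD_eq_rank] at hα
  simp only [rkD_eq_rank]
  exact exists_le_rank_eq f hα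

/-- for a nonempty set `Y`, a countably complete filter `D` on `Y` and
`f : Y → Ord`, every ordinal `α ≤ rk_D f` is of the form `rk_D g` for some `g` with
`g y ≤ f y` everywhere; moreover if `α < rk_D f` then `g` may be chosen with `g <_D f`. -/
theorem stmt1 {Y : Type} [Nonempty Y] (D : Filter Y)
    (hcc : CountableInterFilter D) (hne : D.NeBot)
    (f : Y → Ordinal) (α : Ordinal.{1}) (hα : α ≤ rkD D f) :
    ∃ g : Y → Ordinal, (∀ y, g y ≤ f y) ∧ rkD D g = α ∧
      (α < rkD D f → ltD D g f) :=
  stmt1_general D hcc hne f α hα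
end

section
/- Let κ be an uncountable cardinal, D a κ-complete filter on a set Y, f : Y → Ord, and suppose Y = ⋃_{α<α*} Y_α where α* is an ordinal with |α*| < κ. Then rk_D(f) = min{rk_{D+Y_α}(f) : α < α* and Y_α ∈ D⁺}. -/
/-!
Monotonicity of rank under refining the filter gives `rk_D f ≤ rk_{D+Y_α} f`. For the reverse
inequality, first refine the cover to a partition `Y = ⋃ᵢ p⁻¹{i}` with fewer than `κ` pieces and
argue by induction on `f` along `<_D`. If every positive piece had `rk_D f < rk_{D+p⁻¹{i}} f`,
pick `gᵢ <_{D+p⁻¹{i}} f` with `rk_D f ≤ rk_{D+p⁻¹{i}} gᵢ` and glue them to `g y = g_{p y} y`.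
By `κ`-completeness `g <_D f`, and the induction hypothesis yields a positive piece with
`rk_{D+p⁻¹{i}} gᵢ = rk_{D+p⁻¹{i}} g ≤ rk_D g < rk_D f`, a contradiction.
-/

open Filter Cardinal

theorem Acc.rank_le_rank_of_subrelation {α : Type*} {r r' : α → α → Prop}
    (h : Subrelation r r') {a : α} (ha : Acc r a) (ha' : Acc r' a) :
    ha.rank ≤ ha'.rank := by
  induction ha' with
  | intro a _ ih =>
    rw [ha.rank_eq, Acc.rank_eq]
    exact Ordinal.iSup_le fun ⟨b, hb⟩ =>
      (Order.succ_le_succ (ih b (h hb) _)).trans (Ordinal.le_iSup _ (⟨b, h hb⟩ : {b // r' b a}))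

section ltD

variable {Y : Type} {D E : Filter Y}

theorem wellFounded_ltD [D.NeBot] [CountableInterFilter D] : WellFounded (ltD D) := by
  refine wellFounded_iff_isEmpty_descending_chain.mpr ⟨fun ⟨e, he⟩ => ?_⟩
  obtain ⟨y, hy⟩ := (eventually_countable_forall.mpr he).exists
  exact (RelEmbedding.natGT (fun n => e n y) hy).not_wellFounded Ordinal.lt_wf

instance [D.NeBot] [CountableInterFilter D] : IsWellFounded (Y → Ordinal) (ltD D) :=
  ⟨wellFounded_ltD⟩

variable {f g : Y → Ordinal.{0}}

theorem rkD_eq_rank_s3 [D.NeBot] [CountableInterFilter D] :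
    rkD D f = IsWellFounded.rank (ltD D) f :=
  dif_pos _

theorem rkD_lt_rkD [D.NeBot] [CountableInterFilter D] (h : ltD D g f) : rkD D g < rkD D f := by
  simpa only [rkD_eq_rank_s3] using IsWellFounded.rank_lt_of_rel h

theorem rkD_le_rkD_of_eventuallyLE [D.NeBot] [CountableInterFilter D] (h : g ≤ᶠ[D] f) :
    rkD D g ≤ rkD D f := by
  rw [rkD_eq_rank_s3, IsWellFounded.rank_eq]
  refine Ordinal.iSup_le fun ⟨g', hg'⟩ => Order.succ_le_of_lt ?_
  exact rkD_eq_rank_s3 (D := D) (f := f) ▸ IsWellFounded.rank_lt_of_rel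
    (mem_of_superset (inter_mem hg' h) fun y (hy : g' y < g y ∧ g y ≤ f y) => hy.1.trans_le hy.2)

theorem exists_ltD_le_rkD [D.NeBot] [CountableInterFilter D] {o : Ordinal} (h : o < rkD D f) :
    ∃ g, ltD D g f ∧ o ≤ rkD D g := by
  rw [rkD_eq_rank_s3, IsWellFounded.rank_eq, Ordinal.lt_iSup_iff] at h
  obtain ⟨⟨g, hg⟩, hlt⟩ := h
  exact ⟨g, hg, rkD_eq_rank_s3 (D := D) (f := g) ▸ Order.lt_succ_iff.mp hlt⟩

theorem rkD_le_rkD_of_le [E.NeBot] [CountableInterFilter E] (hED : E ≤ D) :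
    rkD D f ≤ rkD E f := by
  have hsub : Subrelation (ltD D) (ltD E) := fun h => hED h
  have hacc := (wellFounded_ltD (D := E)).apply f
  rw [rkD, rkD, dif_pos (Subrelation.accessible hsub hacc), dif_pos hacc]
  exact Acc.rank_le_rank_of_subrelation hsub _ _

theorem neBot_inf_principal_iff {s : Set Y} : (D ⊓ 𝓟 s).NeBot ↔ sᶜ ∉ D :=
  neBot_iff.trans (not_congr inf_principal_eq_bot)

theorem exists_neBot_rkD_inf_principal_preimage_le {κ : Cardinal.{0}} [D.NeBot]
    [CountableInterFilter D] [CardinalInterFilter D κ] {ι : Type} (hι : #ι < κ) (p : Y → ι)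
    (f : Y → Ordinal.{0}) :
    ∃ i, (D ⊓ 𝓟 (p ⁻¹' {i})).NeBot ∧ rkD (D ⊓ 𝓟 (p ⁻¹' {i})) f ≤ rkD D f := by
  induction f using (wellFounded_ltD (D := D)).induction with
  | _ f ih =>
    by_contra! hlt
    have hpred : ∀ i, (D ⊓ 𝓟 (p ⁻¹' {i})).NeBot →
        ∃ g, ltD (D ⊓ 𝓟 (p ⁻¹' {i})) g f ∧ rkD D f ≤ rkD (D ⊓ 𝓟 (p ⁻¹' {i})) g :=
      fun i hi => exists_ltD_le_rkD (hlt i hi)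
    choose! g hgf hrk using hpred
    have hGf : ltD D (fun y => g (p y) y) f := by
      have hpiece : ∀ i, ∀ᶠ y in D, p y = i → g i y < f y := by
        intro i
        by_cases hi : (p ⁻¹' {i})ᶜ ∈ D
        · filter_upwards [hi] with y hy hyi using absurd hyi hy
        · exact mem_inf_principal.mp (hgf i (neBot_inf_principal_iff.mpr hi))
      filter_upwards [(eventually_cardinal_forall hι).mpr hpiece] with y hy using hy (p y) rfl
    obtain ⟨i, hi, hGi⟩ := ih _ hGf
    have hgG : g i ≤ᶠ[D ⊓ 𝓟 (p ⁻¹' {i})] fun y => g (p y) y :=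
      mem_inf_of_right fun y (hy : p y = i) => show g i y ≤ g (p y) y from hy ▸ le_rfl
    exact (((hrk i hi).trans (rkD_le_rkD_of_eventuallyLE hgG)).trans hGi).not_gt (rkD_lt_rkD hGf)

end ltD

theorem stmt3_general (κ : Cardinal) (hκ : Cardinal.aleph0 < κ) {Y : Type}
    (D : Filter Y) (hne : D.NeBot)
    (hcomp : ∀ S : Set (Set Y), (∀ s ∈ S, s ∈ D) → Cardinal.mk S < κ → ⋂₀ S ∈ D)
    (f : Y → Ordinal) (αstar : Ordinal) (hαstar : αstar.card < κ)
    (Yα : Ordinal → Set Y) (hcov : ⋃ β ∈ Set.Iio αstar, Yα β = Set.univ) :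
    (∃ β < αstar, (Yα β)ᶜ ∉ D ∧ rkD D f = rkD (D ⊓ Filter.principal (Yα β)) f) ∧
      ∀ β < αstar, (Yα β)ᶜ ∉ D → rkD D f ≤ rkD (D ⊓ Filter.principal (Yα β)) f := by
  have : CardinalInterFilter D κ := ⟨fun S hS h => hcomp S h hS⟩
  have := CardinalInterFilter.toCountableInterFilter D hκ
  have hle : ∀ β, (Yα β)ᶜ ∉ D → rkD D f ≤ rkD (D ⊓ 𝓟 (Yα β)) f := fun β hβ =>
    haveI := neBot_inf_principal_iff.mpr hβ
    rkD_le_rkD_of_le inf_le_left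
  refine ⟨?_, fun β _ hβ => hle β hβ⟩
  have hidx : ∀ y, ∃ i : αstar.ToType, y ∈ Yα (Ordinal.ToType.mk.symm i) := fun y => by
    obtain ⟨β, hβ, hy⟩ := Set.mem_iUnion₂.mp (hcov ▸ Set.mem_univ y)
    exact ⟨Ordinal.ToType.mk ⟨β, hβ⟩, by simpa using hy⟩
  choose p hp using hidx
  obtain ⟨i, hi, hrk⟩ :=
    exists_neBot_rkD_inf_principal_preimage_le (D := D) ((mk_toType αstar).trans_lt hαstar) p f
  have hfiner : D ⊓ 𝓟 (p ⁻¹' {i}) ≤ D ⊓ 𝓟 (Yα (Ordinal.ToType.mk.symm i)) :=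
    inf_le_inf_left _ (principal_mono.mpr fun y (hy : p y = i) => hy ▸ hp y)
  have hβ := neBot_inf_principal_iff.mp (hi.mono hfiner)
  exact ⟨_, (Ordinal.ToType.mk.symm i).2, hβ,
    (hle _ hβ).antisymm ((rkD_le_rkD_of_le hfiner).trans hrk)⟩

/-- if `κ` is an uncountable cardinal, `D` a `κ`-complete filter on `Y`
(i.e. `∅ ∉ D` and `D` is closed under intersections of fewer than `κ` of its members),
`f : Y → Ord`, and `Y = ⋃_{α < α*} Y_α` with `|α*| < κ`, then
`rk_D f = min{rk_{D+Y_α} f : α < α*, Y_α ∈ D⁺}`. -/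
theorem stmt3 (κ : Cardinal) (hκ : Cardinal.aleph0 < κ) {Y : Type} [Nonempty Y]
    (D : Filter Y) (hne : D.NeBot)
    (hcomp : ∀ S : Set (Set Y), (∀ s ∈ S, s ∈ D) → Cardinal.mk S < κ → ⋂₀ S ∈ D)
    (f : Y → Ordinal) (αstar : Ordinal) (hαstar : αstar.card < κ)
    (Yα : Ordinal → Set Y) (hcov : ⋃ β ∈ Set.Iio αstar, Yα β = Set.univ) :
    (∃ β < αstar, (Yα β)ᶜ ∉ D ∧ rkD D f = rkD (D ⊓ Filter.principal (Yα β)) f) ∧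
      ∀ β < αstar, (Yα β)ᶜ ∉ D → rkD D f ≤ rkD (D ⊓ Filter.principal (Yα β)) f :=
  stmt3_general κ hκ D hne hcomp f αstar hαstar Yα hcov
end

section
/- Let λ be an infinite cardinal and suppose λ (viewed as the set of ordinals below λ) equals ⋃{W_z : z ∈ Z} (not necessarily disjoint), where 2^{|Z|} < λ. Then sup{otp(W_z) : z ∈ Z} = λ. -/
/-! Each `W z` lies inside `λ`, so its order type is at most `λ`. Conversely, `|otp W_z| = |W_z|`
and `λ ≤ |Z| · sup_z |W_z|`; as `|Z| < 2^|Z| < λ` and `λ` is infinite, this product can only reach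
`λ` if `sup_z |W_z| ≥ λ`, whence `sup_z otp W_z ≥ λ`. -/

universe u v

/-- The order type of a set of ordinals. -/
noncomputable def otp (s : Set Ordinal) : Ordinal.{1} :=
  Ordinal.type ((· < ·) : s → s → Prop)

open Cardinal in
theorem Cardinal.le_iSup_mk_of_le_mk_iUnion {α : Type u} {ι : Type v} (s : ι → Set α)
    {κ : Cardinal.{max u v}} (hκ : ℵ₀ ≤ κ) (hι : lift.{u} #ι < κ)
    (h : κ ≤ lift.{v} #(⋃ i, s i)) : κ ≤ ⨆ i, lift.{v} #(s i) := by
  by_contra! hsup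
  exact (h.trans (mk_iUnion_le_lift s)).not_gt (mul_lt_of_lt hκ hι hsup)

theorem otp_mono {s t : Set Ordinal} (h : s ⊆ t) : otp s ≤ otp t :=
  (⟨⟨Set.inclusion h, Set.inclusion_injective h⟩, Iff.rfl⟩ :
    ((· < ·) : s → s → Prop) ↪r ((· < ·) : t → t → Prop)).ordinal_type_le

theorem otp_Iio (o : Ordinal.{0}) : otp (Set.Iio o) = Ordinal.lift.{1} o := by
  have := @RelIso.ordinal_lift_type_eq _ _ _ _ inferInstance isWellOrder_lt
    (Ordinal.ToType.mk (o := o)).toRelIsoLT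
  rwa [Ordinal.lift_uzero, Ordinal.type_toType] at this

theorem card_otp (s : Set Ordinal) : (otp s).card = Cardinal.mk s :=
  Ordinal.card_type _

/-- if an infinite cardinal `λ` (viewed as the set of ordinals `< λ`) equals
`⋃{W_z : z ∈ Z}` (not necessarily disjoint) where `2^|Z| < λ`, then
`sup{otp W_z : z ∈ Z} = λ`. -/
theorem stmt7 (lam : Cardinal) (hlam : Cardinal.aleph0 ≤ lam)
    {Z : Type} (W : Z → Set Ordinal)
    (hcov : ⋃ z, W z = Set.Iio lam.ord)
    (hZ : (2 : Cardinal) ^ Cardinal.mk Z < lam) :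
    ⨆ z, otp (W z) = Ordinal.lift.{1} lam.ord := by
  have hsub : ∀ z, W z ⊆ Set.Iio lam.ord := fun z => hcov ▸ Set.subset_iUnion W z
  refine le_antisymm (Ordinal.iSup_le fun z => (otp_mono (hsub z)).trans_eq (otp_Iio _)) ?_
  rw [Cardinal.lift_ord, Cardinal.ord_le]
  have hmk : Cardinal.lift.{1} lam ≤ Cardinal.lift.{0} (Cardinal.mk (⋃ z, W z)) := by
    rw [hcov, Cardinal.mk_Iio_ordinal, Cardinal.card_ord, Cardinal.lift_uzero]
  calc Cardinal.lift.{1} lam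
      ≤ ⨆ z, Cardinal.lift.{0} (Cardinal.mk (W z)) :=
        Cardinal.le_iSup_mk_of_le_mk_iUnion W (Cardinal.aleph0_le_lift.2 hlam)
          (Cardinal.lift_lt.2 ((Cardinal.cantor _).trans hZ)) hmk
    _ ≤ (⨆ z, otp (W z)).card := ciSup_le' fun z => by
        rw [Cardinal.lift_uzero, ← card_otp]
        exact Ordinal.card_le_card (Ordinal.le_iSup (fun z => otp (W z)) z)
end

section
/- For every infinite cardinal λ there exists a function F from the countably infinite subsets of λ to λ such that there is no sequence ⟨U_n : n < ω⟩ of subsets of λ satisfying: U_{n+1} ⊆ U_n, U_{n+1} ≠ U_n, and each U_n is closed under F (i.e. F(u) ∈ U_n for every countably infinite u ⊆ U_n). In other words, there is an algebra on λ with one ω-ary operation having no strictly decreasing ω-chain of subuniverses. -/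
/-!
A countable set `v` of ordinals is read through a fixed ω-ladder of its strict supremum
`δ = sup {a + 1 | a ∈ v}`: the ladder cuts `v` into blocks, and the block sequence is compared
with a canonical representative of its class modulo finitely many blocks. `F v` is the least
ordinal below `δ` that is missing from `v` although the representative puts it into the last
block where the two disagree.

Given a strictly decreasing chain `U`, pick `x n ∈ U n \ U (n + 1)`. Passing to subsequences
of smaller bound (well-foundedness), we may assume that some bound `δ` of the sequence has only
finitely many `x n` below each `β < δ`. Then all tails `{x n | n ≥ k}` have strict supremum `δ`,
pairwise differ in finitely many blocks only, and so share their canonical representative `R`.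
A tail that has emptied a block beyond every disagreement of the whole sequence with `R`
disagrees with `R` last at a block where `R` is the trace of the whole sequence; so `F` of the
tail is some discarded `x j` with `j < k`. But the tail lies in `U k`, which is closed under
`F`, while `x j ∉ U (j + 1) ⊇ U k`.
-/

open Set Filter Function

noncomputable section

namespace OmegaAlgebra

def strictSup (v : Set Ordinal) : Ordinal := ⨆ a : v, (a : Ordinal) + 1

lemma lt_strictSup {v : Set Ordinal} (hv : v.Countable) {a : Ordinal} (ha : a ∈ v) :
    a < strictSup v := by
  have := hv.to_subtype
  exact Order.add_one_le_iff.1 <| le_ciSup (f := fun a : v => (a : Ordinal) + 1)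
    Ordinal.bddAbove_of_small ⟨a, ha⟩

lemma strictSup_le {v : Set Ordinal} {β : Ordinal} (hne : v.Nonempty) (h : ∀ a ∈ v, a < β) :
    strictSup v ≤ β := by
  have := hne.to_subtype
  exact ciSup_le fun a => Order.add_one_le_iff.2 (h a a.2)

def IsLadder (δ : Ordinal) (L : ℕ → Ordinal) : Prop :=
  (∀ n, L n < δ) ∧ ∀ a < δ, ∃ n, a < L n

def ladder (δ : Ordinal) : ℕ → Ordinal := Classical.epsilon (IsLadder δ)

def blockIndex (δ a : Ordinal) : ℕ := sInf {n | a < ladder δ n}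

lemma lt_ladder_blockIndex {δ a : Ordinal} (h : ∃ L, IsLadder δ L) (ha : a < δ) :
    a < ladder δ (blockIndex δ a) :=
  Nat.sInf_mem ((Classical.epsilon_spec h).2 a ha)

def blockTrace (v : Set Ordinal) (i : ℕ) : Set Ordinal :=
  {a ∈ v | blockIndex (strictSup v) a = i}

lemma blockTrace_eq_inter {v w : Set Ordinal} (hvw : v ⊆ w) (h : strictSup v = strictSup w)
    (i : ℕ) : blockTrace v i = blockTrace w i ∩ v := by
  ext a
  simp only [blockTrace, h, mem_inter_iff, mem_ofPred_eq]
  exact ⟨fun ⟨hv, hi⟩ => ⟨⟨hvw hv, hi⟩, hv⟩, fun ⟨⟨_, hi⟩, hv⟩ => ⟨hv, hi⟩⟩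

def canonicalTrace (v : Set Ordinal) : ℕ → Set Ordinal :=
  Quotient.out (blockTrace v : (cofinite : Filter ℕ).Germ (Set Ordinal))

lemma canonicalTrace_eventuallyEq (v : Set Ordinal) :
    canonicalTrace v =ᶠ[cofinite] blockTrace v :=
  Germ.coe_eq.1 (Quotient.out_eq _)

lemma canonicalTrace_congr {v w : Set Ordinal} (h : blockTrace v =ᶠ[cofinite] blockTrace w) :
    canonicalTrace v = canonicalTrace w :=
  congrArg Quotient.out (Germ.coe_eq.2 h)

def defects (v : Set Ordinal) : Set ℕ := {i | blockTrace v i ≠ canonicalTrace v i}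

lemma defects_finite (v : Set Ordinal) : (defects v).Finite := by
  simpa only [defects, ne_comm] using eventually_cofinite.1 (canonicalTrace_eventuallyEq v)

lemma canonicalTrace_of_notMem_defects {v : Set Ordinal} {i : ℕ} (hi : i ∉ defects v) :
    canonicalTrace v i = blockTrace v i :=
  (not_not.1 hi).symm

def F (v : Set Ordinal) : Ordinal :=
  sInf ((canonicalTrace v (sSup (defects v)) ∩ Iio (strictSup v)) \ v)

lemma F_lt {u : Set Ordinal} {β : Ordinal} (hu : u ⊆ Iio β) (hne : u.Nonempty) : F u < β := by
  rcases eq_empty_or_nonempty ((canonicalTrace u (sSup (defects u)) ∩ Iio (strictSup u)) \ u)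
    with hempty | hS
  · obtain ⟨a, ha⟩ := hne
    rw [F, hempty, Ordinal.sInf_empty]
    exact zero_le.trans_lt (hu ha)
  · exact (csInf_mem hS).1.2.trans_le (strictSup_le hne hu)

structure ConvergesTo (y : ℕ → Ordinal) (δ : Ordinal) : Prop where
  injective : Injective y
  lt : ∀ n, y n < δ
  finite_lt : ∀ β < δ, {n | y n < β}.Finite

section Convergent

variable {y : ℕ → Ordinal} {δ : Ordinal}

lemma tail_infinite (hy : Injective y) (k : ℕ) : (y '' Ici k).Infinite :=
  (Ici_infinite k).image hy.injOn

lemma strictSup_tail (hy : ConvergesTo y δ) (k : ℕ) : strictSup (y '' Ici k) = δ := by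
  refine le_antisymm (strictSup_le (tail_infinite hy.injective k).nonempty ?_)
    (not_lt.1 fun h => ?_)
  · rintro _ ⟨n, -, rfl⟩
    exact hy.lt n
  · refine Ici_infinite k ((hy.finite_lt _ h).subset fun n hn => ?_)
    exact lt_strictSup ((countable_range y).mono (image_subset_range _ _)) (mem_image_of_mem y hn)

lemma isLadder (hy : ConvergesTo y δ) : IsLadder δ y := by
  refine ⟨hy.lt, fun a ha => ?_⟩
  by_contra! h
  have hcover : univ ⊆ {n | y n < a} ∪ y ⁻¹' {a} := fun n _ => (h n).lt_or_eq
  have hfin := (hy.finite_lt a ha).union ((finite_singleton a).preimage hy.injective.injOn)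
  exact infinite_univ (hfin.subset hcover)

lemma lt_ladder_of_mem_blockTrace_tail (hy : ConvergesTo y δ) {k i : ℕ} {a : Ordinal}
    (ha : a ∈ blockTrace (y '' Ici k) i) : ∃ n, k ≤ n ∧ y n = a ∧ y n < ladder δ i := by
  obtain ⟨⟨n, hn, rfl⟩, hi⟩ := ha
  rw [strictSup_tail hy] at hi
  exact ⟨n, hn, rfl, hi ▸ lt_ladder_blockIndex ⟨y, isLadder hy⟩ (hy.lt n)⟩

lemma ladder_lt (hy : ConvergesTo y δ) (i : ℕ) : ladder δ i < δ :=
  (Classical.epsilon_spec ⟨y, isLadder hy⟩).1 i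

lemma blockTrace_tail_finite (hy : ConvergesTo y δ) (k i : ℕ) :
    (blockTrace (y '' Ici k) i).Finite := by
  refine ((hy.finite_lt _ (ladder_lt hy i)).image y).subset fun a ha => ?_
  obtain ⟨n, -, rfl, hn⟩ := lt_ladder_of_mem_blockTrace_tail hy ha
  exact mem_image_of_mem y hn

lemma exists_blockTrace_tail_eq_empty (hy : ConvergesTo y δ) (i : ℕ) :
    ∃ k, blockTrace (y '' Ici k) i = ∅ := by
  obtain ⟨M, hM⟩ := (hy.finite_lt _ (ladder_lt hy i)).bddAbove
  refine ⟨M + 1, eq_empty_of_forall_notMem fun a ha => ?_⟩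
  obtain ⟨n, hkn, -, hn⟩ := lt_ladder_of_mem_blockTrace_tail hy ha
  exact absurd (hM hn) (by omega)

lemma blockTrace_tail_eq_inter (hy : ConvergesTo y δ) (k i : ℕ) :
    blockTrace (y '' Ici k) i = blockTrace (y '' Ici 0) i ∩ y '' Ici k :=
  blockTrace_eq_inter (image_mono (Ici_subset_Ici.2 k.zero_le))
    ((strictSup_tail hy k).trans (strictSup_tail hy 0).symm) i

lemma blockTrace_tail_eventuallyEq (hy : ConvergesTo y δ) (k : ℕ) :
    blockTrace (y '' Ici k) =ᶠ[cofinite] blockTrace (y '' Ici 0) := by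
  refine eventually_cofinite.2 ((((finite_Iio k).image y).image (blockIndex δ)).subset ?_)
  intro i hi
  rw [mem_ofPred_eq, blockTrace_tail_eq_inter hy, inter_eq_left, not_subset] at hi
  obtain ⟨a, ⟨⟨n, -, rfl⟩, hn⟩, hnk⟩ := hi
  rw [strictSup_tail hy] at hn
  exact ⟨y n, ⟨n, mem_Iio.2 (not_le.1 fun h => hnk ⟨n, h, rfl⟩), rfl⟩, hn⟩

lemma blockTrace_tail_nonempty_infinite (hy : ConvergesTo y δ) :
    {i | (blockTrace (y '' Ici 0) i).Nonempty}.Infinite := by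
  intro hS
  refine tail_infinite hy.injective 0
    ((hS.biUnion fun i _ => blockTrace_tail_finite hy 0 i).subset fun a ha => ?_)
  have hmem : a ∈ blockTrace (y '' Ici 0) (blockIndex (strictSup (y '' Ici 0)) a) := ⟨ha, rfl⟩
  exact mem_biUnion ⟨a, hmem⟩ hmem

theorem exists_F_tail_eq_of_convergesTo (hy : ConvergesTo y δ) :
    ∃ j k, j < k ∧ F (y '' Ici k) = y j := by
  set T : ℕ → Set Ordinal := fun k => y '' Ici k
  have hR (k : ℕ) : canonicalTrace (T k) = canonicalTrace (T 0) :=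
    canonicalTrace_congr (blockTrace_tail_eventuallyEq hy k)
  obtain ⟨N, hN⟩ := (defects_finite (T 0)).bddAbove
  have hgood {i : ℕ} (hi : N < i) : canonicalTrace (T 0) i = blockTrace (T 0) i :=
    canonicalTrace_of_notMem_defects fun h => (hN h).not_gt hi
  obtain ⟨i, hne, hi⟩ := (blockTrace_tail_nonempty_infinite hy).exists_gt N
  obtain ⟨k, hk⟩ := exists_blockTrace_tail_eq_empty hy i
  have hik : i ∈ defects (T k) := by
    rw [defects, mem_ofPred_eq, hR, hgood hi, hk]
    exact hne.ne_empty.symm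
  set j := sSup (defects (T k))
  have hj : j ∈ defects (T k) := Nat.sSup_mem ⟨i, hik⟩ (defects_finite _).bddAbove
  have hij : N < j := hi.trans_le (le_csSup (defects_finite _).bddAbove hik)
  have hlost : (blockTrace (T 0) j \ T k).Nonempty := by
    rw [sdiff_nonempty]
    intro hsub
    rw [defects, mem_ofPred_eq, hR, hgood hij, blockTrace_tail_eq_inter hy,
      inter_eq_left.2 hsub] at hj
    exact hj rfl
  have hS : ((canonicalTrace (T k) j ∩ Iio (strictSup (T k))) \ T k).Nonempty := by
    obtain ⟨a, ⟨⟨n, -, rfl⟩, hn⟩, hnk⟩ := hlost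
    refine ⟨y n, ⟨?_, ?_⟩, hnk⟩
    · rw [hR, hgood hij]; exact ⟨⟨n, n.zero_le, rfl⟩, hn⟩
    · rw [mem_Iio, strictSup_tail hy]; exact hy.lt n
  obtain ⟨⟨hFR, -⟩, hFk⟩ : F (T k) ∈ (canonicalTrace (T k) j ∩ Iio (strictSup (T k))) \ T k :=
    csInf_mem hS
  rw [hR, hgood hij] at hFR
  obtain ⟨⟨n, -, hn⟩, -⟩ := hFR
  exact ⟨n, k, not_le.1 fun h => hFk ⟨n, h, hn⟩, hn.symm⟩

end Convergent

theorem exists_F_eq_of_injective {y : ℕ → Ordinal} (hy : Injective y) :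
    ∃ j k, j < k ∧ ∃ s ⊆ y '' Ici k, s.Infinite ∧ F s = y j := by
  suffices h : ∀ δ (y : ℕ → Ordinal), Injective y → (∀ n, y n < δ) →
      ∃ j k, j < k ∧ ∃ s ⊆ y '' Ici k, s.Infinite ∧ F s = y j by
    obtain ⟨b, hb⟩ := Ordinal.bddAbove_of_small (s := range y)
    exact h (b + 1) y hy fun n => Order.lt_add_one_iff.2 (hb ⟨n, rfl⟩)
  intro δ
  induction δ using WellFoundedLT.induction with | _ δ IH => ?_
  intro y hy hlt
  by_cases hconv : ∀ β < δ, {n | y n < β}.Finite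
  · obtain ⟨j, k, hjk, hF⟩ := exists_F_tail_eq_of_convergesTo ⟨hy, hlt, hconv⟩
    exact ⟨j, k, hjk, _, subset_rfl, tail_infinite hy k, hF⟩
  push Not at hconv
  obtain ⟨β, hβ, hinf⟩ := hconv
  have hφ : StrictMono (Nat.nth (y · < β)) := Nat.nth_strictMono hinf
  obtain ⟨j, k, hjk, s, hs, hsinf, hF⟩ :=
    IH β hβ (y ∘ Nat.nth (y · < β)) (hy.comp hφ.injective) (Nat.nth_mem_of_infinite hinf)
  refine ⟨_, _, hφ hjk, s, hs.trans ?_, hsinf, hF⟩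
  rw [image_comp]
  exact image_mono (image_subset_iff.2 fun n hn => hφ.monotone hn)

theorem not_forall_F_mem_of_strictAnti {U : ℕ → Set Ordinal} (hU : StrictAnti U) :
    ¬ ∀ n, ∀ u ⊆ U n, u.Countable → u.Infinite → F u ∈ U n := by
  intro hclosed
  choose x hxU hxU' using fun n => exists_of_ssubset (hU (Nat.lt_succ_self n))
  have hx_ne {a b : ℕ} (hab : a < b) : x a ≠ x b := fun h =>
    hxU' a (h ▸ hU.antitone (Nat.succ_le_of_lt hab) (hxU b))
  have hx : Injective x := fun a b h => by
    rcases lt_trichotomy a b with hab | rfl | hab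
    exacts [absurd h (hx_ne hab), rfl, absurd h.symm (hx_ne hab)]
  obtain ⟨j, k, hjk, s, hs, hsinf, hF⟩ := exists_F_eq_of_injective hx
  have hsU : s ⊆ U k := hs.trans (image_subset_iff.2 fun n hn => hU.antitone hn (hxU n))
  have hcount : s.Countable := (countable_range x).mono (hs.trans (image_subset_range _ _))
  exact hxU' j (hU.antitone (Nat.succ_le_of_lt hjk) (hF ▸ hclosed k s hsU hcount hsinf))

end OmegaAlgebra

theorem stmt10_general (lam : Cardinal) :
    ∃ F : Set Ordinal → Ordinal,
      (∀ u, u ⊆ Set.Iio lam.ord → u.Countable → u.Infinite → F u < lam.ord) ∧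
      ¬ ∃ U : ℕ → Set Ordinal,
        (∀ n, U n ⊆ Set.Iio lam.ord) ∧
        (∀ n, U (n + 1) ⊆ U n) ∧ (∀ n, U (n + 1) ≠ U n) ∧
        (∀ n, ∀ u, u ⊆ U n → u.Countable → u.Infinite → F u ∈ U n) := by
  refine ⟨OmegaAlgebra.F, fun u hu _ hinf => OmegaAlgebra.F_lt hu hinf.nonempty, ?_⟩
  rintro ⟨U, -, hsub, hne, hclosed⟩
  exact OmegaAlgebra.not_forall_F_mem_of_strictAnti
    (strictAnti_nat_of_succ_lt fun n => (hsub n).ssubset_of_ne (hne n)) hclosed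

/-- for every infinite cardinal `λ` there is a function `F` from the
countably infinite subsets of `λ` to `λ` such that there is no sequence `⟨U_n : n < ω⟩`
of subsets of `λ` with `U_{n+1} ⊆ U_n`, `U_{n+1} ≠ U_n`, and each `U_n` closed under `F`
(i.e. `F u ∈ U_n` for every countably infinite `u ⊆ U_n`). -/
theorem stmt10 (lam : Cardinal) (hlam : Cardinal.aleph0 ≤ lam) :
    ∃ F : Set Ordinal → Ordinal,
      (∀ u, u ⊆ Set.Iio lam.ord → u.Countable → u.Infinite → F u < lam.ord) ∧
      ¬ ∃ U : ℕ → Set Ordinal,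
        (∀ n, U n ⊆ Set.Iio lam.ord) ∧
        (∀ n, U (n + 1) ⊆ U n) ∧ (∀ n, U (n + 1) ≠ U n) ∧
        (∀ n, ∀ u, u ⊆ U n → u.Countable → u.Infinite → F u ∈ U n) :=
  stmt10_general lam
end
end

section
/- Let ∂ be a regular infinite cardinal, α an ordinal, and cℓ : P(α) → P(α) a monotone operation (u ⊆ v implies cℓ(u) ⊆ cℓ(v)) with u ⊆ cℓ(u) for all u ⊆ α. Then the following are equivalent: (i) there is no ⊆-decreasing sequence ⟨U_ε : ε < ∂⟩ of subsets of α such that U_ε ⊄ cℓ(U_{ε+1}) for every ε < ∂; (ii) for every sequence ⟨β_ε : ε < ∂⟩ of ordinals below α there is ε < ∂ with β_ε ∈ cℓ({β_ζ : ε < ζ < ∂}). -/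
/-!
A sequence `β` violating (ii) yields a bad sequence `U`, namely its tails `U ε = β '' [ε, κ)`,
because `U (ε + 1)` is exactly `β '' (ε, κ)`. Conversely, from a bad sequence `U` choose
`β ε ∈ U ε \ cl (U (ε + 1))`; since `κ = ∂.ord` is a limit ordinal, `β '' (ε, κ) ⊆ U (ε + 1)`, and
monotonicity of `cl` shows that `β` violates (ii).
-/

open Set

/-- Condition (i) fails exactly when such a sequence exists. -/
def IsBadSequence (κ α : Ordinal) (cl : Set Ordinal → Set Ordinal)
    (U : Ordinal → Set Ordinal) : Prop :=
  (∀ ε < κ, U ε ⊆ Iio α) ∧ (∀ ε ζ, ε ≤ ζ → ζ < κ → U ζ ⊆ U ε) ∧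
    ∀ ε < κ, ¬ U ε ⊆ cl (U (ε + 1))

theorem setOf_exists_lt_lt_eq_image {ι γ : Type*} [Preorder ι] (f : ι → γ) (a b : ι) :
    {x | ∃ i, a < i ∧ i < b ∧ x = f i} = f '' Ioo a b := by
  ext
  simp [eq_comm, and_assoc]

section

variable {κ α : Ordinal} {cl : Set Ordinal → Set Ordinal}

theorem isBadSequence_image_Ico {β : Ordinal → Ordinal} (hβ : ∀ ε < κ, β ε < α)
    (hbad : ∀ ε < κ, β ε ∉ cl (β '' Ioo ε κ)) :
    IsBadSequence κ α cl (fun ε => β '' Ico ε κ) := by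
  refine ⟨?_, fun ε ζ hεζ _ => image_mono (Ico_subset_Ico_left hεζ), ?_⟩
  · rintro ε - _ ⟨ζ, hζ, rfl⟩
    exact hβ ζ hζ.2
  · intro ε hε hsub
    dsimp only at hsub
    rw [← Order.succ_eq_add_one, Order.Ico_succ_left] at hsub
    exact hbad ε hε (hsub ⟨ε, ⟨le_rfl, hε⟩, rfl⟩)

theorem exists_forall_notMem_cl_of_isBadSequence (hκ : Order.IsSuccLimit κ)
    (hmono : ∀ u v, u ⊆ v → v ⊆ Iio α → cl u ⊆ cl v) {U : Ordinal → Set Ordinal}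
    (hU : IsBadSequence κ α cl U) :
    ∃ β : Ordinal → Ordinal, (∀ ε < κ, β ε < α) ∧ ∀ ε < κ, β ε ∉ cl (β '' Ioo ε κ) := by
  obtain ⟨hUα, hUanti, hUbad⟩ := hU
  choose! β hβU hβcl using fun ε hε => not_subset.mp (hUbad ε hε)
  refine ⟨β, fun ε hε => hUα ε hε (hβU ε hε), fun ε hε hmem => hβcl ε hε ?_⟩
  have hsucc : ε + 1 < κ := hκ.succ_lt hε
  have htail : β '' Ioo ε κ ⊆ U (ε + 1) := by
    rintro _ ⟨ζ, ⟨hεζ, hζ⟩, rfl⟩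
    exact hUanti _ ζ (Order.add_one_le_iff.mpr hεζ) hζ (hβU ζ hζ)
  exact hmono _ _ htail (hUα _ hsucc) hmem

end

theorem stmt12_general (par : Cardinal) (hpar : par.IsRegular) (α : Ordinal)
    (cl : Set Ordinal → Set Ordinal)
    (hmono : ∀ u v, u ⊆ v → v ⊆ Set.Iio α → cl u ⊆ cl v) :
    (¬ ∃ U : Ordinal → Set Ordinal,
        (∀ ε < par.ord, U ε ⊆ Set.Iio α) ∧
        (∀ ε ζ, ε ≤ ζ → ζ < par.ord → U ζ ⊆ U ε) ∧
        (∀ ε < par.ord, ¬ U ε ⊆ cl (U (ε + 1)))) ↔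
    (∀ β : Ordinal → Ordinal, (∀ ε < par.ord, β ε < α) →
        ∃ ε < par.ord, β ε ∈ cl {x | ∃ ζ, ε < ζ ∧ ζ < par.ord ∧ x = β ζ}) := by
  simp only [setOf_exists_lt_lt_eq_image]
  constructor
  · intro hnoBad β hβ
    by_contra! hbad
    exact hnoBad ⟨_, isBadSequence_image_Ico hβ hbad⟩
  · rintro hgood ⟨U, hU⟩
    obtain ⟨β, hβα, hbad⟩ := exists_forall_notMem_cl_of_isBadSequence
      (Cardinal.isSuccLimit_ord hpar.aleph0_le) hmono hU
    obtain ⟨ε, hε, hmem⟩ := hgood β hβα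
    exact hbad ε hε hmem

/-- let `∂` be a regular infinite cardinal, `α` an ordinal, and
`cℓ : P(α) → P(α)` a monotone operation with `u ⊆ cℓ u`.  Then the following are
equivalent: (i) there is no `⊆`-decreasing sequence `⟨U_ε : ε < ∂⟩` of subsets of `α`
with `U_ε ⊄ cℓ (U_{ε+1})` for every `ε < ∂`; (ii) for every sequence `⟨β_ε : ε < ∂⟩`
of ordinals below `α` there is `ε < ∂` with `β_ε ∈ cℓ {β_ζ : ε < ζ < ∂}`. -/
theorem stmt12 (par : Cardinal) (hpar : par.IsRegular) (α : Ordinal)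
    (cl : Set Ordinal → Set Ordinal)
    (hcl : ∀ u, u ⊆ Set.Iio α → cl u ⊆ Set.Iio α)
    (hmono : ∀ u v, u ⊆ v → v ⊆ Set.Iio α → cl u ⊆ cl v)
    (hsub : ∀ u, u ⊆ Set.Iio α → u ⊆ cl u) :
    (¬ ∃ U : Ordinal → Set Ordinal,
        (∀ ε < par.ord, U ε ⊆ Set.Iio α) ∧
        (∀ ε ζ, ε ≤ ζ → ζ < par.ord → U ζ ⊆ U ε) ∧
        (∀ ε < par.ord, ¬ U ε ⊆ cl (U (ε + 1)))) ↔
    (∀ β : Ordinal → Ordinal, (∀ ε < par.ord, β ε < α) →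
        ∃ ε < par.ord, β ε ∈ cl {x | ∃ ζ, ε < ζ ∧ ζ < par.ord ∧ x = β ζ}) :=
  stmt12_general par hpar α cl hmono
end

section
/- Let ∂ be a regular infinite cardinal and θ, μ₁ cardinals with ∂ < θ. Let α be an ordinal and cℓ a function from {v ⊆ α : |v| < θ} to {w ⊆ α : |w| < μ₁} with v ∪ {0} ⊆ cℓ(v), and suppose there is no ⊆-decreasing sequence ⟨u_ε : ε < ∂⟩ of subsets of α of cardinality < θ such that u_ε ⊄ cℓ(u_{ε+1}) for every ε < ∂. Define cℓ′(u) = ⋃{cℓ(v) : v ⊆ u, |v| < θ} for u ⊆ α. Then: (i) for every u ⊆ α, |cℓ′(u)| ≤ μ₁ · |[u]^{<θ}| (where [u]^{<θ} is the set of subsets of u of size < θ); and (ii) for every ⊆-decreasing sequence ⟨u_ε : ε < ∂⟩ of arbitrary subsets of α there is ε < ∂ with u_ε ⊆ cℓ′(u_{ε+1}). -/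
/-- `cℓ' u = ⋃{cℓ v : v ⊆ u, |v| < θ}`. -/
def clPrime (θ : Cardinal.{0}) (cl : Set Ordinal.{0} → Set Ordinal.{0}) (u : Set Ordinal.{0}) :
    Set Ordinal.{0} :=
  ⋃ v ∈ {v : Set Ordinal.{0} | v ⊆ u ∧ Cardinal.mk v < Cardinal.lift.{1, 0} θ}, cl v

/-- let `∂` be a regular infinite cardinal, `θ, μ₁` cardinals with `∂ < θ`,
`α` an ordinal, and `cℓ` a map from `{v ⊆ α : |v| < θ}` to `{w ⊆ α : |w| < μ₁}` with
`v ∪ {0} ⊆ cℓ v`, such that there is no `⊆`-decreasing `∂`-sequence of subsets of `α` of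
cardinality `< θ` with `u_ε ⊄ cℓ (u_{ε+1})` for all `ε < ∂`.  With
`cℓ' u = ⋃{cℓ v : v ⊆ u, |v| < θ}` we have: (i) `|cℓ' u| ≤ μ₁ · |[u]^{<θ}|` for every
`u ⊆ α`; and (ii) every `⊆`-decreasing `∂`-sequence of arbitrary subsets of `α` has some
`ε < ∂` with `u_ε ⊆ cℓ' (u_{ε+1})`. -/
theorem stmt13 (par θ μ₁ : Cardinal.{0}) (hpar : par.IsRegular) (hθ : par < θ)
    (α : Ordinal) (cl : Set Ordinal.{0} → Set Ordinal.{0})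
    (hcl : ∀ v, v ⊆ Set.Iio α → Cardinal.mk v < Cardinal.lift.{1, 0} θ →
        cl v ⊆ Set.Iio α ∧ Cardinal.mk (cl v) < Cardinal.lift.{1, 0} μ₁ ∧ v ∪ {0} ⊆ cl v)
    (hnodec : ¬ ∃ u : Ordinal → Set Ordinal.{0},
        (∀ ε < par.ord, u ε ⊆ Set.Iio α ∧ Cardinal.mk (u ε) < Cardinal.lift.{1, 0} θ) ∧
        (∀ ε ζ, ε ≤ ζ → ζ < par.ord → u ζ ⊆ u ε) ∧
        (∀ ε < par.ord, ¬ u ε ⊆ cl (u (ε + 1)))) :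
    (∀ u, u ⊆ Set.Iio α →
        Cardinal.mk (clPrime θ cl u) ≤ Cardinal.lift.{1, 0} μ₁ *
          Cardinal.mk {v : Set Ordinal.{0} | v ⊆ u ∧ Cardinal.mk v < Cardinal.lift.{1, 0} θ}) ∧
    (∀ u : Ordinal → Set Ordinal.{0}, (∀ ε < par.ord, u ε ⊆ Set.Iio α) →
        (∀ ε ζ, ε ≤ ζ → ζ < par.ord → u ζ ⊆ u ε) →
        ∃ ε < par.ord, u ε ⊆ clPrime θ cl (u (ε + 1))) := by
  constructor
  · intro u hu
    have h1 := Cardinal.mk_biUnion_le cl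
      {v : Set Ordinal.{0} | v ⊆ u ∧ Cardinal.mk v < Cardinal.lift.{1, 0} θ}
    refine h1.trans ?_
    rw [mul_comm]
    refine mul_le_mul' (ciSup_le' fun v => ?_) le_rfl
    exact (hcl v.1 (v.2.1.trans hu) v.2.2).2.1.le
  · intro u hα hu
    by_contra hcon
    push_neg at hcon
    -- choose witnesses
    have hw : ∀ ε, ε < par.ord → ∃ x, x ∈ u ε ∧ x ∉ clPrime θ cl (u (ε + 1)) := by
      intro ε hε
      obtain ⟨x, hx1, hx2⟩ := Set.not_subset.mp (hcon ε hε)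
      exact ⟨x, hx1, hx2⟩
    classical
    let x : Ordinal → Ordinal := fun ε =>
      if h : ε < par.ord then (hw ε h).choose else 0
    have hx1 : ∀ ε (h : ε < par.ord), x ε ∈ u ε := by
      intro ε h; simp only [x, dif_pos h]; exact (hw ε h).choose_spec.1
    have hx2 : ∀ ε (h : ε < par.ord), x ε ∉ clPrime θ cl (u (ε + 1)) := by
      intro ε h; simp only [x, dif_pos h]; exact (hw ε h).choose_spec.2
    set v : Ordinal → Set Ordinal.{0} :=
      fun ε => x '' {ζ | ε ≤ ζ ∧ ζ < par.ord} with hv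
    have hvsmall : ∀ ε, Cardinal.mk (v ε) < Cardinal.lift.{1, 0} θ := by
      intro ε
      have h1 : Cardinal.mk (v ε) ≤ Cardinal.mk {ζ : Ordinal | ε ≤ ζ ∧ ζ < par.ord} :=
        Cardinal.mk_image_le
      have h2 : Cardinal.mk {ζ : Ordinal | ε ≤ ζ ∧ ζ < par.ord} ≤
          Cardinal.mk (Set.Iio par.ord) :=
        Cardinal.mk_le_mk_of_subset (fun ζ hζ => hζ.2)
      have h3 : Cardinal.mk (Set.Iio par.ord) = Cardinal.lift.{1, 0} par := by
        rw [Ordinal.mk_Iio_ordinal, Cardinal.card_ord]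
      calc Cardinal.mk (v ε) ≤ Cardinal.lift.{1, 0} par := h1.trans (h2.trans h3.le)
        _ < Cardinal.lift.{1, 0} θ := Cardinal.lift_lt.mpr hθ
    have hvsub : ∀ ε, ε < par.ord → v ε ⊆ u ε := by
      rintro ε hε y ⟨ζ, ⟨hζ1, hζ2⟩, rfl⟩
      exact hu ε ζ hζ1 hζ2 (hx1 ζ hζ2)
    refine hnodec ⟨v, ?_, ?_, ?_⟩
    · intro ε hε
      exact ⟨(hvsub ε hε).trans (hα ε hε), hvsmall ε⟩
    · rintro ε ζ hεζ _ y ⟨ξ, ⟨hξ1, hξ2⟩, rfl⟩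
      exact ⟨ξ, ⟨hεζ.trans hξ1, hξ2⟩, rfl⟩
    · intro ε hε hsub
      have hxv : x ε ∈ v ε := ⟨ε, ⟨le_rfl, hε⟩, rfl⟩
      have : x ε ∈ clPrime θ cl (u (ε + 1)) := by
        refine Set.mem_biUnion ?_ (hsub hxv)
        refine ⟨?_, hvsmall (ε + 1)⟩
        rintro y ⟨ξ, ⟨hξ1, hξ2⟩, rfl⟩
        exact hu (ε + 1) ξ hξ1 hξ2 (hx1 ξ hξ2)
      exact hx2 ε hε this
end

section
/- Let 𝔞 be a countable set of limit ordinals such that cf(θ) > 2^{ℵ₀} for every θ ∈ 𝔞, and let ∏𝔞 denote the set of functions f with domain 𝔞 satisfying f(θ) < θ for all θ ∈ 𝔞. Then there exist an ordinal i(*), a sequence ⟨J_i : i ≤ i(*)⟩ of ideals on 𝔞, a sequence ⟨𝔟_i : i < i(*)⟩ of subsets of 𝔞, and a sequence ⟨f̄^i : i < i(*)⟩ with f̄^i = ⟨f^i_α : α < α_i⟩, such that: (α) J_i is ⊆-increasing continuous in i, J_0 = {∅}, J_{i(*)} = P(𝔞), and J_{i+1} is the ideal generated by J_i ∪ {𝔟_i};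 (β) each f^i_α ∈ ∏𝔞, f̄^i is <_{J_i}-increasing in α, and {f^i_α : α < α_i} is cofinal in (∏𝔞, <_{J′_i}) where J′_i is the ideal generated by J_i ∪ {𝔞 ∖ 𝔟_i}; and (γ) for every f ∈ ∏𝔞 there are n < ω and pairs (i_ℓ, γ_ℓ) for ℓ < n with i_ℓ < i(*) and γ_ℓ < α_{i_ℓ}, such that for every θ ∈ 𝔞 there is ℓ < n with f(θ) < f^{i_ℓ}_{γ_ℓ}(θ). -/
/-- `S` is an ideal on (the set) `X`: it contains `∅`, is downward closed under `⊆`,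
and is closed under finite (binary) unions. -/
def IsIdealOn {X : Type*} (S : Set (Set X)) : Prop :=
  ∅ ∈ S ∧ (∀ x y : Set X, x ⊆ y → y ∈ S → x ∈ S) ∧
    ∀ x y : Set X, x ∈ S → y ∈ S → x ∪ y ∈ S

/-- The ideal generated by an ideal `J` together with one further set `b`. -/
def idealGen {X : Type*} (J : Set (Set X)) (b : Set X) : Set (Set X) :=
  {Z : Set X | ∃ x ∈ J, Z ⊆ x ∪ b}

/-!
For a proper ideal `J`, run a `<_J`-increasing chain through `∏ 𝔞`, always choosing a strict
`<_J`-upper bound, until none exists at some stage `δ`. Fewer than `cf θ` members of `∏ 𝔞` have a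
pointwise bound, so `cf δ > 2^ℵ₀`; hence for every `g` the sets `{θ | g θ < f_α θ}`, which grow
modulo `J`, take a single value `S_g` cofinally often below `δ`. Then `S_g ∉ J`, and `S_g` shrinks
modulo `J` as `g` grows, so bounding a witness for each of the at most `2^ℵ₀` values gives `g*`
with `S_{g*}` minimal modulo `J`; `𝔟 = S_{g*}` makes the chain cofinal modulo `J + (𝔞 ∖ 𝔟)`.
Iterating `J_{i+1} = J_i + 𝔟_i` (unions at limits) must reach `𝒫 𝔞`, since the `𝔟_i` are
distinct.
-/

open Cardinal Ordinal Set

universe t u w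

section Ideals

variable {X : Type u} {J C : Set (Set X)} {b x y z : Set X}

theorem IsIdealOn.mono (hJ : IsIdealOn J) (hxy : x ⊆ y) (hy : y ∈ J) : x ∈ J :=
  hJ.2.1 x y hxy hy

theorem IsIdealOn.union_mem (hJ : IsIdealOn J) (hx : x ∈ J) (hy : y ∈ J) : x ∪ y ∈ J :=
  hJ.2.2 x y hx hy

theorem IsIdealOn.mem_of_subset_union (hJ : IsIdealOn J) (h : x ⊆ y ∪ z) (hy : y ∈ J)
    (hz : z ∈ J) : x ∈ J :=
  hJ.mono h (hJ.union_mem hy hz)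

theorem subset_idealGen : J ⊆ idealGen J b :=
  fun Z hZ => ⟨Z, hZ, subset_union_left⟩

theorem IsIdealOn.idealGen (hJ : IsIdealOn J) : IsIdealOn (idealGen J b) := by
  refine ⟨⟨∅, hJ.1, empty_subset _⟩, ?_, ?_⟩
  · rintro x y hxy ⟨z, hz, hyz⟩
    exact ⟨z, hz, hxy.trans hyz⟩
  · rintro x y ⟨z, hz, hxz⟩ ⟨z', hz', hyz'⟩
    refine ⟨z ∪ z', hJ.union_mem hz hz', union_subset ?_ ?_⟩
    · exact hxz.trans (union_subset_union_left _ subset_union_left)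
    · exact hyz'.trans (union_subset_union_left _ subset_union_right)

theorem idealGen_subset (hC : IsIdealOn C) (hJ : J ⊆ C) (hb : b ∈ C) : idealGen J b ⊆ C :=
  fun _ ⟨_, hx, hZx⟩ => hC.mem_of_subset_union hZx (hJ hx) hb

end Ideals

namespace Pcf

section Products

variable {X : Type u} {α : Type*}

/-- The paper's `∏ 𝔞` is `prodBelow (Subtype.val : 𝔞 → Ordinal)`. -/
def prodBelow [LT α] (v : X → α) : Set (X → α) :=
  {f | ∀ θ, f θ < v θ}

/-- `f <_J g`. -/
def LtMod [LE α] (J : Set (Set X)) (f g : X → α) : Prop :=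
  {θ | g θ ≤ f θ} ∈ J

variable [Preorder α] {J : Set (Set X)} {f g h : X → α}

theorem ltMod_of_forall_lt (hJ : IsIdealOn J) (hfg : ∀ θ, f θ < g θ) : LtMod J f g :=
  hJ.mono (fun θ hθ => (hfg θ).not_ge hθ) hJ.1

theorem LtMod.trans_le (hJ : IsIdealOn J) (hfg : LtMod J f g) (hgh : g ≤ h) : LtMod J f h :=
  hJ.mono (fun θ hθ => (hgh θ).trans hθ) hfg

end Products

theorem exists_mem_subset_union_of_ltMod_idealGen_compl {X : Type u} {α : Type*} [LinearOrder α]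
    {J : Set (Set X)} {b : Set X} {f g : X → α} (h : LtMod (idealGen J bᶜ) g f) :
    ∃ E ∈ J, b ⊆ E ∪ {θ | g θ < f θ} := by
  obtain ⟨E, hE, hsub⟩ := h
  refine ⟨E, hE, fun θ hθb => ?_⟩
  by_cases hlt : g θ < f θ
  · exact Or.inr hlt
  · exact (hsub (not_lt.1 hlt)).imp id fun hθ => absurd hθb hθ

theorem lift_mk_set_lt_of_countable {X : Type u} [Countable X] {c : Cardinal.{w}}
    (h : 2 ^ ℵ₀ < c) : Cardinal.lift.{w} #(Set X) < Cardinal.lift.{u} c := by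
  rw [mk_set, lift_two_power]
  calc (2 : Cardinal) ^ Cardinal.lift.{w} #X ≤ 2 ^ ℵ₀ :=
        power_le_power_left two_ne_zero (by simp [mk_le_aleph0 (α := X)])
    _ = Cardinal.lift.{u} (2 ^ ℵ₀) := by simp
    _ < Cardinal.lift.{u} c := Cardinal.lift_lt.2 h

theorem exists_forall_lt_mem_prodBelow {X : Type u} {ι : Type t} {v : X → Ordinal.{w}}
    (hι : ∀ θ, Cardinal.lift.{w} #ι < Cardinal.lift.{t} (v θ).cof)
    (F : ι → X → Ordinal.{w}) (hF : ∀ i, F i ∈ prodBelow v) :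
    ∃ h ∈ prodBelow v, ∀ i θ, F i θ < h θ := by
  refine ⟨fun θ => ⨆ i, (F i θ + 1), fun θ => ?_, fun i θ => ?_⟩
  · exact lift_iSup_add_one_lt_of_lt_cof (by rw [← lift_cof]; exact hι θ) (hF · θ)
  · refine (lt_add_one _).trans_le (le_ciSup (f := fun i => F i θ + 1) ⟨v θ, ?_⟩ i)
    rintro _ ⟨j, rfl⟩
    exact Order.add_one_le_iff.2 (hF j θ)

theorem isSuccLimit_of_lift_mk_lt_cof {ι : Type t} [Nonempty ι] {o : Ordinal.{w}}
    (h : Cardinal.lift.{w} #ι < Cardinal.lift.{t} o.cof) : Order.IsSuccLimit o := by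
  refine one_lt_cof_iff.1 (Cardinal.lift_lt.{w, t}.1 (lt_of_le_of_lt ?_ h))
  simp [Cardinal.one_le_iff_ne_zero]

theorem exists_frequently_eq_of_lt_cof {ι : Type u} {δ : Ordinal.{w}}
    (hδ : Cardinal.lift.{w} #ι < Cardinal.lift.{u} δ.cof) (A : Ordinal.{w} → ι) :
    ∃ S, ∀ β < δ, ∃ α, β ≤ α ∧ α < δ ∧ A α = S := by
  by_contra! h
  choose bound hbound hne using h
  have hsup : ⨆ S, bound S < δ :=
    lift_iSup_lt_of_lt_cof (by rw [← lift_cof]; exact hδ) hbound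
  refine hne (A (⨆ S, bound S)) _ ?_ hsup rfl
  exact le_ciSup ⟨δ, by rintro _ ⟨S, rfl⟩; exact (hbound S).le⟩ _

section Chain

variable {X : Type u} (v : X → Ordinal.{w}) (J : Set (Set X))

noncomputable def chain : Ordinal.{w} → X → Ordinal.{w} :=
  Ordinal.lt_wf.fix fun α ih =>
    open scoped Classical in
    if h : ∃ f ∈ prodBelow v, ∀ β (hβ : β < α), LtMod J (ih β hβ) f then h.choose else 0

def ChainExtends (α : Ordinal.{w}) : Prop :=
  ∃ f ∈ prodBelow v, ∀ β < α, LtMod J (chain v J β) f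

noncomputable def chainLength : Ordinal.{w} :=
  sInf {α | ¬ChainExtends v J α}

def exceedSet (g : X → Ordinal.{w}) (α : Ordinal.{w}) : Set X :=
  {θ | g θ < chain v J α θ}

def IsStableSet (g : X → Ordinal.{w}) (S : Set X) : Prop :=
  ∀ β < chainLength v J, ∃ α, β ≤ α ∧ α < chainLength v J ∧ exceedSet v J g α = S

variable {v J} {α β : Ordinal.{w}} {g g' : X → Ordinal.{w}} {S S' : Set X}

open scoped Classical in
theorem chain_eq (α : Ordinal.{w}) :
    chain v J α = if h : ChainExtends v J α then h.choose else 0 := by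
  show Ordinal.lt_wf.fix _ α = _
  rw [WellFounded.fix_eq]
  rfl

theorem ChainExtends.chain_mem (h : ChainExtends v J α) : chain v J α ∈ prodBelow v := by
  classical
  rw [chain_eq, dif_pos h]
  exact h.choose_spec.1

theorem ChainExtends.ltMod_chain (h : ChainExtends v J α) (hβ : β < α) :
    LtMod J (chain v J β) (chain v J α) := by
  classical
  rw [chain_eq α, dif_pos h]
  exact h.choose_spec.2 β hβ

/-- A chain in `∏ v` that never stops would inject the ordinals into a small type. -/
theorem exists_not_chainExtends [Small.{w} X] (hP : Set.univ ∉ J) : ∃ α, ¬ChainExtends v J α := by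
  by_contra! hall
  have hinj : Function.Injective fun α θ =>
      (⟨chain v J α θ, (hall α).chain_mem θ⟩ : Iio (v θ)) := by
    intro α β hαβ
    have heq : chain v J α = chain v J β := funext fun θ => congrArg Subtype.val (congrFun hαβ θ)
    by_contra hne
    rcases lt_or_gt_of_ne hne with h | h
    · exact hP (by simpa [LtMod, heq] using (hall β).ltMod_chain h)
    · exact hP (by simpa [LtMod, heq] using (hall α).ltMod_chain h)
  exact not_small_ordinal.{w} (small_of_injective hinj)

theorem not_chainExtends_chainLength [Small.{w} X] (hP : Set.univ ∉ J) :
    ¬ChainExtends v J (chainLength v J) :=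
  csInf_mem (exists_not_chainExtends hP)

theorem chainExtends_of_lt_chainLength (h : α < chainLength v J) : ChainExtends v J α :=
  not_not.1 fun hα => (csInf_le' hα).not_gt h

theorem chainLength_pos [Small.{w} X] (hP : Set.univ ∉ J) (hv : (prodBelow v).Nonempty) :
    0 < chainLength v J := by
  obtain ⟨f, hf⟩ := hv
  refine pos_iff_ne_zero.2 fun h => not_chainExtends_chainLength (v := v) hP ?_
  exact h ▸ ⟨f, hf, fun β hβ => absurd hβ (not_lt_bot (a := β))⟩

/-- A family of fewer than `cf (v θ)` members of the chain has a strict upper bound in `∏ v`,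
so the chain cannot stop at an ordinal of smaller cofinality. -/
theorem lift_mk_lt_cof_chainLength [Small.{w} X] {ι : Type t} (hJ : IsIdealOn J) (hP : Set.univ ∉ J)
    (hι : ∀ θ, Cardinal.lift.{w} #ι < Cardinal.lift.{t} (v θ).cof) :
    Cardinal.lift.{w} #ι < Cardinal.lift.{t} (chainLength v J).cof := by
  by_contra! hle
  obtain ⟨s, hs, hcard⟩ := Order.exists_cof_eq (Iio (chainLength v J))
  have hsmall : ∀ θ, Cardinal.lift.{w} #s < Cardinal.lift.{w + 1} (v θ).cof := by
    intro θ
    rw [hcard, cof_Iio, ← lift_cof, Cardinal.lift_lift, Cardinal.lift_lt]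
    exact Cardinal.lift_lt.1 (hle.trans_lt (hι θ))
  obtain ⟨h, hh, hlt⟩ := exists_forall_lt_mem_prodBelow hsmall (fun x => chain v J x.1.1)
    fun x => (chainExtends_of_lt_chainLength x.1.2).chain_mem
  refine not_chainExtends_chainLength hP ⟨h, hh, fun β hβ => ?_⟩
  obtain ⟨x, hx, hβx⟩ := hs ⟨β, hβ⟩
  rcases (show β ≤ x.1 from hβx).lt_or_eq with hlt' | rfl
  · exact ((chainExtends_of_lt_chainLength x.2).ltMod_chain hlt').trans_le hJ
      fun θ => (hlt ⟨x, hx⟩ θ).le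
  · exact ltMod_of_forall_lt hJ (hlt ⟨x, hx⟩)

theorem exceedSet_diff_mem (hJ : IsIdealOn J) (hαβ : α ≤ β) (hβ : β < chainLength v J) :
    exceedSet v J g α \ exceedSet v J g β ∈ J := by
  rcases hαβ.lt_or_eq with hlt | rfl
  · refine hJ.mono (fun θ hθ => ?_) ((chainExtends_of_lt_chainLength hβ).ltMod_chain hlt)
    exact (not_lt.1 hθ.2).trans (show g θ < chain v J α θ from hθ.1).le
  · simpa using hJ.1

theorem exists_isStableSet [Small.{w} X] (hJ : IsIdealOn J) (hP : Set.univ ∉ J)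
    (hc : ∀ θ, Cardinal.lift.{w} #(Set X) < Cardinal.lift.{u} (v θ).cof) (g : X → Ordinal.{w}) :
    ∃ S, IsStableSet v J g S :=
  exists_frequently_eq_of_lt_cof (lift_mk_lt_cof_chainLength hJ hP hc) (exceedSet v J g)

theorem IsStableSet.exceedSet_diff_mem (hJ : IsIdealOn J) (hS : IsStableSet v J g S)
    (hα : α < chainLength v J) : exceedSet v J g α \ S ∈ J := by
  obtain ⟨α', hαα', hα', rfl⟩ := hS α hα
  exact exceedSet_diff_mem hJ hαα' hα'

/-- If `S` were in `J`, then `succ ∘ g` would be a strict `<_J`-upper bound of the whole chain. -/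
theorem IsStableSet.notMem [Small.{w} X] (hJ : IsIdealOn J) (hP : Set.univ ∉ J)
    (hv : ∀ θ, Order.IsSuccLimit (v θ)) (hg : g ∈ prodBelow v) (hS : IsStableSet v J g S) :
    S ∉ J := by
  intro hSJ
  refine not_chainExtends_chainLength hP
    ⟨fun θ => Order.succ (g θ), fun θ => (hv θ).succ_lt (hg θ), fun α hα => ?_⟩
  have hset : {θ | Order.succ (g θ) ≤ chain v J α θ} = exceedSet v J g α := by
    ext θ
    exact Order.succ_le_iff (a := g θ)
  rw [LtMod, hset]
  exact hJ.mem_of_subset_union (subset_sdiff_union _ S)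
    (hS.exceedSet_diff_mem hJ hα) hSJ

theorem IsStableSet.diff_mem_of_le (hJ : IsIdealOn J) (hpos : 0 < chainLength v J)
    (hgg' : g ≤ g') (hS : IsStableSet v J g S) (hS' : IsStableSet v J g' S') : S' \ S ∈ J := by
  obtain ⟨α, -, hα, rfl⟩ := hS' 0 hpos
  exact hJ.mono (sdiff_subset_sdiff_left fun θ hθ => (hgg' θ).trans_lt hθ)
    (hS.exceedSet_diff_mem hJ hα)

/-- Bounding one witness for each of the at most `2^|X|` stable sets yields a function whose
stable set is minimal modulo `J`. -/
theorem exists_forall_isStableSet_diff_mem [Small.{w} X] (hJ : IsIdealOn J) (hP : Set.univ ∉ J)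
    (hc : ∀ θ, Cardinal.lift.{w} #(Set X) < Cardinal.lift.{u} (v θ).cof) :
    ∃ b ∉ J, ∀ g ∈ prodBelow v, ∃ S, IsStableSet v J g S ∧ b \ S ∈ J := by
  have hv θ := isSuccLimit_of_lift_mk_lt_cof (hc θ)
  have hpos := chainLength_pos (J := J) hP ⟨0, fun θ => (hv θ).bot_lt⟩
  choose Sg hSg using exists_isStableSet hJ hP hc
  choose pick hpick using fun S : Sg '' prodBelow v => S.2
  have hcard θ : Cardinal.lift.{w} #(Sg '' prodBelow v) < Cardinal.lift.{u} (v θ).cof :=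
    (Cardinal.lift_le.2 (mk_subtype_le _)).trans_lt (hc θ)
  obtain ⟨gstar, hgstar, hbound⟩ :=
    exists_forall_lt_mem_prodBelow hcard pick fun S => (hpick S).1
  refine ⟨Sg gstar, (hSg gstar).notMem hJ hP hv hgstar, fun g hg => ⟨Sg g, hSg g, ?_⟩⟩
  have hS : Sg (pick ⟨Sg g, g, hg, rfl⟩) = Sg g := (hpick _).2
  rw [← hS]
  exact (hSg _).diff_mem_of_le hJ hpos (fun θ => (hbound _ θ).le) (hSg gstar)

end Chain

structure Step (X : Type u) : Type (max u (w + 1)) where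
  gen : Set X
  len : Ordinal.{w}
  seq : Ordinal.{w} → X → Ordinal.{w}

instance {X : Type u} : Inhabited (Step.{u, w} X) :=
  ⟨⟨∅, 0, 0⟩⟩

structure Step.IsCofinal {X : Type u} (v : X → Ordinal.{w}) (J : Set (Set X)) (s : Step X) :
    Prop where
  gen_notMem : s.gen ∉ J
  seq_mem : ∀ α < s.len, s.seq α ∈ prodBelow v
  seq_ltMod : ∀ α β, α < β → β < s.len → LtMod J (s.seq α) (s.seq β)
  exists_ltMod : ∀ g ∈ prodBelow v, ∃ α < s.len, LtMod (idealGen J s.genᶜ) g (s.seq α)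

theorem exists_step_isCofinal {X : Type u} [Small.{w} X] {v : X → Ordinal.{w}}
    {J : Set (Set X)} (hJ : IsIdealOn J) (hP : Set.univ ∉ J)
    (hc : ∀ θ, Cardinal.lift.{w} #(Set X) < Cardinal.lift.{u} (v θ).cof) :
    ∃ s : Step X, s.IsCofinal v J := by
  have hpos := chainLength_pos (J := J) hP
    ⟨0, fun θ => (isSuccLimit_of_lift_mk_lt_cof (hc θ)).bot_lt⟩
  obtain ⟨b, hb, hmin⟩ := exists_forall_isStableSet_diff_mem hJ hP hc
  refine ⟨⟨b, chainLength v J, chain v J⟩, hb,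
    fun α hα => (chainExtends_of_lt_chainLength hα).chain_mem,
    fun α β hαβ hβ => (chainExtends_of_lt_chainLength hβ).ltMod_chain hαβ, fun g hg => ?_⟩
  obtain ⟨S, hS, hbS⟩ := hmin g hg
  obtain ⟨α, -, hα, hαS⟩ := hS 0 hpos
  refine ⟨α, hα, b \ S, hbS, fun θ (hθ : chain v J α θ ≤ g θ) => ?_⟩
  have hθS : θ ∉ S := hαS ▸ not_lt.2 hθ
  by_cases hθb : θ ∈ b
  · exact Or.inl ⟨hθb, hθS⟩
  · exact Or.inr hθb

section IdealSeq

variable {X : Type u} (G : Set (Set X) → Set X)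

noncomputable def idealSeq (i : Ordinal.{w}) : Set (Set X) :=
  Ordinal.limitRecOn i {∅} (fun _ J => idealGen J (G J)) fun o _ ih => ⋃ j, ⋃ h : j < o, ih j h

@[simp]
theorem idealSeq_zero : idealSeq G 0 = {∅} :=
  Ordinal.limitRecOn_zero ..

theorem idealSeq_add_one (i : Ordinal.{w}) :
    idealSeq G (i + 1) = idealGen (idealSeq G i) (G (idealSeq G i)) :=
  Ordinal.limitRecOn_add_one ..

theorem idealSeq_limit {i : Ordinal.{w}} (hi : Order.IsSuccLimit i) :
    idealSeq G i = ⋃ j ∈ Iio i, idealSeq G j :=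
  Ordinal.limitRecOn_limit _ _ _ _ hi

theorem idealSeq_mono : Monotone (idealSeq.{u, w} G) := by
  intro i j hij
  induction j using Ordinal.limitRecOn with
  | zero => rw [nonpos_iff_eq_zero.1 hij]
  | add_one k ih =>
    rcases hij.lt_or_eq with hlt | rfl
    · rw [idealSeq_add_one]
      exact (ih (Order.lt_add_one_iff.1 hlt)).trans subset_idealGen
    · rfl
  | limit k hk ih =>
    rcases hij.lt_or_eq with hlt | rfl
    · rw [idealSeq_limit G hk]
      exact subset_biUnion_of_mem (u := idealSeq G) hlt
    · rfl

theorem isIdealOn_idealSeq (i : Ordinal.{w}) : IsIdealOn (idealSeq G i) := by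
  induction i using Ordinal.limitRecOn with
  | zero =>
    rw [idealSeq_zero]
    exact ⟨rfl, fun x y hxy hy => subset_eq_empty hxy hy, fun x y hx hy => by simp_all⟩
  | add_one k ih =>
    rw [idealSeq_add_one]
    exact ih.idealGen
  | limit k hk ih =>
    rw [idealSeq_limit G hk]
    refine ⟨mem_biUnion (x := 0) hk.bot_lt (ih 0 hk.bot_lt).1, ?_, ?_⟩
    · simp only [mem_iUnion₂]
      exact fun x y hxy ⟨j, hj, hy⟩ => ⟨j, hj, (ih j hj).mono hxy hy⟩
    · simp only [mem_iUnion₂]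
      rintro x y ⟨j, hj, hx⟩ ⟨j', hj', hy⟩
      refine ⟨max j j', max_lt (α := Ordinal) hj hj', (ih _ (max_lt hj hj')).union_mem ?_ ?_⟩
      · exact idealSeq_mono G (le_max_left j j') hx
      · exact idealSeq_mono G (le_max_right j j') hy

theorem idealSeq_subset {C : Set (Set X)} (hC : IsIdealOn C) {k : Ordinal.{w}}
    (hG : ∀ i < k, idealSeq G i ⊆ C → G (idealSeq G i) ∈ C) : ∀ i ≤ k, idealSeq G i ⊆ C := by
  intro i
  induction i using Ordinal.limitRecOn with
  | zero =>
    intro _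
    rw [idealSeq_zero, singleton_subset_iff]
    exact hC.1
  | add_one i ih =>
    intro hi
    have hik := (Order.lt_add_one_iff.2 le_rfl).trans_le hi
    rw [idealSeq_add_one]
    exact idealGen_subset hC (ih hik.le) (hG i hik (ih hik.le))
  | limit i hi ih =>
    intro hik
    rw [idealSeq_limit G hi]
    exact iUnion₂_subset fun j hj => ih j hj (hj.le.trans hik)

theorem exists_univ_mem_idealSeq [Small.{w} X]
    (hG : ∀ i : Ordinal.{w}, Set.univ ∉ idealSeq G i → G (idealSeq G i) ∉ idealSeq G i) :
    ∃ i : Ordinal.{w}, Set.univ ∈ idealSeq G i := by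
  by_contra! hall
  have hnew (i j : Ordinal.{w}) (hij : i < j) : G (idealSeq G i) ≠ G (idealSeq G j) := by
    intro heq
    refine hG j (hall j) (heq ▸ idealSeq_mono G (Order.add_one_le_iff.2 hij) ?_)
    rw [idealSeq_add_one]
    exact ⟨∅, (isIdealOn_idealSeq G i).1, subset_union_right⟩
  refine not_small_ordinal.{w} (small_of_injective (f := fun i => G (idealSeq G i)) ?_)
  intro i j hij
  by_contra hne
  rcases lt_or_gt_of_ne hne with h | h
  · exact hnew i j h hij
  · exact hnew j i h hij.symm

end IdealSeq

section Dominated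

variable {X : Type u} {ι : Type*} {α : Type*} [LT α] (P : Set ι) (F : ι → X → α) (g : X → α)

def finitelyDominated : Set (Set X) :=
  {Z | ∃ s : Finset ι, ↑s ⊆ P ∧ ∀ θ ∈ Z, ∃ p ∈ s, g θ < F p θ}

theorem isIdealOn_finitelyDominated [DecidableEq ι] : IsIdealOn (finitelyDominated P F g) := by
  refine ⟨⟨∅, by simp, by simp⟩, ?_, ?_⟩
  · rintro x y hxy ⟨s, hsP, hs⟩
    exact ⟨s, hsP, fun θ hθ => hs θ (hxy hθ)⟩
  · rintro x y ⟨s, hsP, hs⟩ ⟨s', hsP', hs'⟩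
    refine ⟨s ∪ s', by rw [Finset.coe_union]; exact union_subset hsP hsP', ?_⟩
    rintro θ (hθ | hθ)
    · obtain ⟨p, hp, h⟩ := hs θ hθ
      exact ⟨p, Finset.mem_union_left _ hp, h⟩
    · obtain ⟨p, hp, h⟩ := hs' θ hθ
      exact ⟨p, Finset.mem_union_right _ hp, h⟩

theorem setOf_lt_mem_finitelyDominated {p : ι} (hp : p ∈ P) :
    {θ | g θ < F p θ} ∈ finitelyDominated P F g :=
  ⟨{p}, by simpa using hp, fun θ hθ => ⟨p, Finset.mem_singleton_self p, hθ⟩⟩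

end Dominated

section Construction

variable {X : Type u} (v : X → Ordinal.{w})

noncomputable def step (J : Set (Set X)) : Step.{u, w} X :=
  Classical.epsilon (Step.IsCofinal v J)

abbrev ideals : Ordinal.{w} → Set (Set X) :=
  idealSeq fun J => (step v J).gen

noncomputable def length : Ordinal.{w} :=
  sInf {i | Set.univ ∈ ideals v i}

variable {v} [Small.{w} X]

theorem step_isCofinal (hc : ∀ θ, Cardinal.lift.{w} #(Set X) < Cardinal.lift.{u} (v θ).cof)
    {J : Set (Set X)} (hJ : IsIdealOn J) (hP : Set.univ ∉ J) : (step v J).IsCofinal v J :=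
  Classical.epsilon_spec (exists_step_isCofinal hJ hP hc)

theorem ideals_length (hc : ∀ θ, Cardinal.lift.{w} #(Set X) < Cardinal.lift.{u} (v θ).cof) :
    ideals v (length v) = Set.univ := by
  have hex : {i | Set.univ ∈ ideals v i}.Nonempty :=
    exists_univ_mem_idealSeq (fun J => (step v J).gen) fun i hP =>
      (step_isCofinal hc (isIdealOn_idealSeq _ i) hP).gen_notMem
  exact eq_univ_of_forall fun Z => (isIdealOn_idealSeq _ _).mono (subset_univ Z) (csInf_mem hex)

theorem step_ideals_isCofinal
    (hc : ∀ θ, Cardinal.lift.{w} #(Set X) < Cardinal.lift.{u} (v θ).cof) {i : Ordinal.{w}}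
    (hi : i < length v) : (step v (ideals v i)).IsCofinal v (ideals v i) :=
  step_isCofinal hc (isIdealOn_idealSeq _ i) fun hP =>
    (csInf_le' (s := {i | Set.univ ∈ ideals v i}) hP).not_gt hi

/-- Each generator `b_i` is covered by `J_i` and one `f^i_α`, so by induction along the
ideals every member of `J_{i(*)} = 𝒫 X` is dominated by finitely many `f^i_α`. -/
theorem exists_finset_dominating
    (hc : ∀ θ, Cardinal.lift.{w} #(Set X) < Cardinal.lift.{u} (v θ).cof)
    {g : X → Ordinal.{w}} (hg : g ∈ prodBelow v) :
    ∃ s : Finset (Ordinal.{w} × Ordinal.{w}),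
      (∀ p ∈ s, p.1 < length v ∧ p.2 < (step v (ideals v p.1)).len) ∧
      ∀ θ, ∃ p ∈ s, g θ < (step v (ideals v p.1)).seq p.2 θ := by
  classical
  set P : Set (Ordinal.{w} × Ordinal.{w}) :=
    {p | p.1 < length v ∧ p.2 < (step v (ideals v p.1)).len}
  set F := fun p : Ordinal.{w} × Ordinal.{w} => (step v (ideals v p.1)).seq p.2
  have hC := isIdealOn_finitelyDominated P F g
  have hsub :=
    idealSeq_subset (fun J => (step v J).gen) hC (k := length v) (fun i hi hJC => ?_) _ le_rfl
  · obtain ⟨s, hsP, hs⟩ := hsub (show Set.univ ∈ ideals v (length v) by simp [ideals_length hc])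
    exact ⟨s, hsP, fun θ => hs θ trivial⟩
  · obtain ⟨α, hα, hlt⟩ := (step_ideals_isCofinal hc hi).exists_ltMod g hg
    obtain ⟨E, hE, hbE⟩ := exists_mem_subset_union_of_ltMod_idealGen_compl hlt
    exact hC.mem_of_subset_union hbE (hJC hE)
      (setOf_lt_mem_finitelyDominated P F g (p := (i, α)) ⟨hi, hα⟩)

end Construction

end Pcf

theorem stmt15_general (a : Set Ordinal.{0}) (hcount : a.Countable)
    (hcof : ∀ θ ∈ a, (2 : Cardinal.{0}) ^ Cardinal.aleph0 < (Ordinal.cof θ)) :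
    ∃ (istar : Ordinal.{0}) (J : Ordinal.{0} → Set (Set ↥a)) (b : Ordinal.{0} → Set ↥a)
      (A : Ordinal.{0} → Ordinal.{0}) (F : Ordinal.{0} → Ordinal.{0} → (↥a → Ordinal.{0})),
      -- (α) the sequence of ideals
      (∀ i ≤ istar, IsIdealOn (J i)) ∧
      (∀ i j, i ≤ j → j ≤ istar → J i ⊆ J j) ∧
      (∀ i ≤ istar, Order.IsSuccLimit i → J i = ⋃ j ∈ Set.Iio i, J j) ∧
      J 0 = {∅} ∧ J istar = Set.univ ∧
      (∀ i < istar, J (i + 1) = idealGen (J i) (b i)) ∧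
      -- (β) the matrix of functions
      (∀ i < istar, ∀ α < A i, ∀ θ : ↥a, F i α θ < (θ : Ordinal)) ∧
      (∀ i < istar, ∀ α β : Ordinal, α < β → β < A i →
        {θ : ↥a | F i β θ ≤ F i α θ} ∈ J i) ∧
      (∀ i < istar, ∀ g : ↥a → Ordinal, (∀ θ : ↥a, g θ < (θ : Ordinal)) →
        ∃ α < A i, {θ : ↥a | F i α θ ≤ g θ} ∈ idealGen (J i) (b i)ᶜ) ∧
      -- (γ) finitely many functions dominate any given one
      (∀ g : ↥a → Ordinal, (∀ θ : ↥a, g θ < (θ : Ordinal)) →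
        ∃ (n : ℕ) (idx : Fin n → Ordinal.{0} × Ordinal.{0}),
          (∀ ℓ, (idx ℓ).1 < istar ∧ (idx ℓ).2 < A (idx ℓ).1) ∧
          ∀ θ : ↥a, ∃ ℓ, g θ < F (idx ℓ).1 (idx ℓ).2 θ) := by
  have : Countable a := hcount.to_subtype
  have hc (θ : a) : Cardinal.lift.{0} #(Set a) < Cardinal.lift.{1} (Ordinal.cof θ) :=
    Pcf.lift_mk_set_lt_of_countable (hcof θ θ.2)
  have hstep {i} (hi : i < Pcf.length Subtype.val) := Pcf.step_ideals_isCofinal hc hi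
  let step' i := Pcf.step Subtype.val (Pcf.ideals (Subtype.val : a → Ordinal) i)
  refine ⟨Pcf.length Subtype.val, Pcf.ideals Subtype.val, fun i => (step' i).gen,
    fun i => (step' i).len, fun i => (step' i).seq, fun i _ => Pcf.isIdealOn_idealSeq _ i,
    fun i j hij _ => Pcf.idealSeq_mono _ hij, fun i _ hi => Pcf.idealSeq_limit _ hi,
    Pcf.idealSeq_zero _, Pcf.ideals_length hc, fun i _ => Pcf.idealSeq_add_one _ i,
    fun i hi => (hstep hi).seq_mem, fun i hi => (hstep hi).seq_ltMod,
    fun i hi => (hstep hi).exists_ltMod, fun g hg => ?_⟩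
  obtain ⟨s, hsP, hs⟩ := Pcf.exists_finset_dominating hc hg
  refine ⟨s.card, fun ℓ => s.equivFin.symm ℓ, fun ℓ => hsP _ (s.equivFin.symm ℓ).2, fun θ => ?_⟩
  obtain ⟨p, hp, hlt⟩ := hs θ
  exact ⟨s.equivFin ⟨p, hp⟩, by simpa using hlt⟩

/-- for a countable set `𝔞` of limit ordinals with `cf θ > 2^ℵ₀` for all
`θ ∈ 𝔞` there are `i(*)`, an increasing continuous sequence of ideals
`⟨J_i : i ≤ i(*)⟩` with `J_0 = {∅}`, `J_{i(*)} = P(𝔞)`, `J_{i+1}` generated by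
`J_i ∪ {𝔟_i}`, together with sequences `f̄^i = ⟨f^i_α : α < α_i⟩` in `∏𝔞` which are
`<_{J_i}`-increasing and cofinal in `(∏𝔞, <_{J_i + (𝔞∖𝔟_i)})`, such that every `f ∈ ∏𝔞`
is dominated by the pointwise maximum of finitely many of the `f^{i_ℓ}_{γ_ℓ}`. -/
theorem stmt15 (a : Set Ordinal.{0}) (hcount : a.Countable)
    (hlim : ∀ θ ∈ a, Order.IsSuccLimit θ)
    (hcof : ∀ θ ∈ a, (2 : Cardinal.{0}) ^ Cardinal.aleph0 < (Ordinal.cof θ)) :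
    ∃ (istar : Ordinal.{0}) (J : Ordinal.{0} → Set (Set ↥a)) (b : Ordinal.{0} → Set ↥a)
      (A : Ordinal.{0} → Ordinal.{0}) (F : Ordinal.{0} → Ordinal.{0} → (↥a → Ordinal.{0})),
      -- (α) the sequence of ideals
      (∀ i ≤ istar, IsIdealOn (J i)) ∧
      (∀ i j, i ≤ j → j ≤ istar → J i ⊆ J j) ∧
      (∀ i ≤ istar, Order.IsSuccLimit i → J i = ⋃ j ∈ Set.Iio i, J j) ∧
      J 0 = {∅} ∧ J istar = Set.univ ∧
      (∀ i < istar, J (i + 1) = idealGen (J i) (b i)) ∧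
      -- (β) the matrix of functions
      (∀ i < istar, ∀ α < A i, ∀ θ : ↥a, F i α θ < (θ : Ordinal)) ∧
      (∀ i < istar, ∀ α β : Ordinal, α < β → β < A i →
        {θ : ↥a | F i β θ ≤ F i α θ} ∈ J i) ∧
      (∀ i < istar, ∀ g : ↥a → Ordinal, (∀ θ : ↥a, g θ < (θ : Ordinal)) →
        ∃ α < A i, {θ : ↥a | F i α θ ≤ g θ} ∈ idealGen (J i) (b i)ᶜ) ∧
      -- (γ) finitely many functions dominate any given one
      (∀ g : ↥a → Ordinal, (∀ θ : ↥a, g θ < (θ : Ordinal)) →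
        ∃ (n : ℕ) (idx : Fin n → Ordinal.{0} × Ordinal.{0}),
          (∀ ℓ, (idx ℓ).1 < istar ∧ (idx ℓ).2 < A (idx ℓ).1) ∧
          ∀ θ : ↥a, ∃ ℓ, g θ < F (idx ℓ).1 (idx ℓ).2 θ) :=
  stmt15_general a hcount hcof
end
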